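/- Let K be a semiring and (Σ,M) an OP alphabet. Let φ be a formula of MSO(K,(Σ,M)) such that ⟦φ⟧ is regular (respectively strictly regular). Then ⟦⊕_x φ⟧ and ⟦⊕_X φ⟧ are regular (respectively strictly regular). -/

import Mathlib

namespace WOP

/-- Precedence relations: yields precedence, equal in precedence, takes precedence. -/
inductive PrecRel where
  | lt | eq | gt
deriving DecidableEq

/-- An operator precedence matrix on `Σ ∪ {#}`, where `none` encodes `#`.
It assigns at most one precedence relation to each ordered pair, with
`# ⋖ a` and `a ⋗ #` for every letter `a`. -/
structure OPM (A : Type) where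
  rel : Option A → Option A → Option PrecRel
  hash_lt : ∀ a : A, rel none (some a) = some .lt
  hash_gt : ∀ a : A, rel (some a) none = some .gt

variable {A B K : Type}

/-- The letter of `#w#` at position `i` (positions `0` and `> |w|` carry `#`, i.e. `none`). -/
def letterAt (w : List A) (i : ℕ) : Option A :=
  if i = 0 then none else w[i - 1]?

section ChainRel

variable (M : OPM A) (L : ℕ → Option A)

mutual
  /-- `ChainMid M L k j`: there are `k = k_s < ... < k_m = j` with
  `L k_s ≐ L k_{s+1} ≐ ... ≐ L k_{m-1} ⋗ L k_m` and the gap condition between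
  consecutive elements. -/
  inductive ChainMid : ℕ → ℕ → Prop where
    | last {k j : ℕ} : M.rel (L k) (L j) = some .gt → ChainGap k j → ChainMid k j
    | step {k k' j : ℕ} : M.rel (L k) (L k') = some .eq → ChainGap k k' →
        ChainMid k' j → ChainMid k j

  /-- The gap condition between consecutive elements of a chain:
  adjacent positions or a chain. -/
  inductive ChainGap : ℕ → ℕ → Prop where
    | adj (k : ℕ) : ChainGap k (k + 1)
    | chain {k k' : ℕ} : Chain k k' → ChainGap k k'

  /-- The chain relation `i ⤳ j`: there are positions `i = k_1 < ... < k_m = j` with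
  `L k_1 ⋖ L k_2 ≐ ... ≐ L k_{m-1} ⋗ L k_m` such that consecutive `k`'s are adjacent
  or themselves related by `⤳`. -/
  inductive Chain : ℕ → ℕ → Prop where
    | mk {i k j : ℕ} : M.rel (L i) (L k) = some .lt → ChainGap i k → ChainMid k j →
        Chain i j
end

end ChainRel

/-- `(Σ,M)^+`: the set of nonempty words compatible with `M`, i.e. `0 ⤳ |w|+1` in `#w#`. -/
def OPWords (M : OPM A) : Set (List A) :=
  {w | w ≠ [] ∧ Chain M (letterAt w) 0 (w.length + 1)}

/-- An (unweighted) operator precedence automaton over the alphabet `A`. -/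
structure OPA (A : Type) where
  Q : Type
  fin : Fintype Q
  I : Set Q
  F : Set Q
  δpush : Set (Q × A × Q)
  δshift : Set (Q × A × Q)
  δpop : Set (Q × Q × Q)

/-- A weighted operator precedence automaton over the alphabet `A` and weights in `K`. -/
structure WOPA (A K : Type) extends OPA A where
  wtpush : Q × A × Q → K
  wtshift : Q × A × Q → K
  wtpop : Q × Q × Q → K

/-- A configuration: a stack of (symbol, state) pairs, a current state,
and the remaining input. -/
structure Config (A Q : Type) where
  stack : List (A × Q)
  state : Q
  input : List A

/-- The moves (transitions) an OPA may take. -/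
inductive Move (A Q : Type) where
  | push (q : Q) (b : A) (r : Q)
  | shift (q : Q) (b : A) (r : Q)
  | pop (q p r : Q)

/-- The topmost stack symbol (`none` = `#` for the empty stack). -/
def topSym {Q : Type} (st : List (A × Q)) : Option A := st.head?.map Prod.fst

/-- One step of an OPA on an OP alphabet `(A, M)`. -/
inductive Exec (M : OPM A) (T : OPA A) : Config A T.Q → Move A T.Q → Config A T.Q → Prop where
  | push {st : List (A × T.Q)} {q r : T.Q} {b : A} {x : List A} :
      M.rel (topSym st) (some b) = some .lt → (q, b, r) ∈ T.δpush →
      Exec M T ⟨st, q, b :: x⟩ (.push q b r) ⟨(b, q) :: st, r, x⟩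
  | shift {st : List (A × T.Q)} {p q r : T.Q} {a b : A} {x : List A} :
      M.rel (some a) (some b) = some .eq → (q, b, r) ∈ T.δshift →
      Exec M T ⟨(a, p) :: st, q, b :: x⟩ (.shift q b r) ⟨(b, p) :: st, r, x⟩
  | pop {st : List (A × T.Q)} {p q r : T.Q} {a : A} {x : List A} :
      M.rel (some a) x.head? = some .gt → (q, p, r) ∈ T.δpop →
      Exec M T ⟨(a, p) :: st, q, x⟩ (.pop q p r) ⟨st, r, x⟩

/-- Execution of a sequence of moves. -/
inductive ExecList (M : OPM A) (T : OPA A) :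
    Config A T.Q → List (Move A T.Q) → Config A T.Q → Prop where
  | nil (c : Config A T.Q) : ExecList M T c [] c
  | cons {c c' c'' : Config A T.Q} {m : Move A T.Q} {ms : List (Move A T.Q)} :
      Exec M T c m c' → ExecList M T c' ms c'' → ExecList M T c (m :: ms) c''

/-- The weight of a move of a weighted OPA. -/
def moveWt [Semiring K] (W : WOPA A K) : Move A W.Q → K
  | .push q b r => W.wtpush (q, b, r)
  | .shift q b r => W.wtshift (q, b, r)
  | .pop q p r => W.wtpop (q, p, r)

/-- The accepting runs of an OPA on `w`: an initial state, a sequence of moves from the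
initial configuration (empty stack, whole input) to a final configuration
(empty stack, input read), and the final state reached. -/
def AccRuns (M : OPM A) (T : OPA A) (w : List A) : Set (T.Q × List (Move A T.Q) × T.Q) :=
  {ρ | ρ.1 ∈ T.I ∧ ρ.2.2 ∈ T.F ∧ ExecList M T ⟨[], ρ.1, w⟩ ρ.2.1 ⟨[], ρ.2.2, []⟩}

/-- The behavior `⟦W⟧(w)`: the sum over all accepting runs of `W` on `w` of the product
(in order) of the weights of the moves of the run. -/
noncomputable def behavior [Semiring K] (M : OPM A) (W : WOPA A K) (w : List A) : K :=
  ∑ᶠ ρ ∈ AccRuns M W.toOPA w, (ρ.2.1.map (moveWt W)).prod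

/-- A weighted OPA is restricted (an rwOPA) if all pop weights are `1`. -/
def Restricted [Semiring K] (W : WOPA A K) : Prop := ∀ t ∈ W.δpop, W.wtpop t = 1

/-- A series `S : (Σ,M)^+ → K` is regular if it is the behavior of some wOPA. -/
def Regular [Semiring K] (M : OPM A) (S : List A → K) : Prop :=
  ∃ W : WOPA A K, ∀ w ∈ OPWords M, S w = behavior M W w

/-- A series is strictly regular if it is the behavior of some restricted wOPA. -/
def StrictlyRegular [Semiring K] (M : OPM A) (S : List A → K) : Prop :=
  ∃ W : WOPA A K, Restricted W ∧ ∀ w ∈ OPWords M, S w = behavior M W w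

/-- Unweighted acceptance. -/
def Accepts (M : OPM A) (T : OPA A) (w : List A) : Prop :=
  ∃ qI ms qF, qI ∈ T.I ∧ qF ∈ T.F ∧ ExecList M T ⟨[], qI, w⟩ ms ⟨[], qF, []⟩

/-- A language `L ⊆ (Σ,M)^+` is an operator precedence language if it is the set of
compatible words accepted by some OPA. -/
def IsOPL (M : OPM A) (L : Set (List A)) : Prop :=
  ∃ T : OPA A, L = {w | w ∈ OPWords M ∧ Accepts M T w}

/-- The intersection `S ∩ L` of a series with a language. -/
noncomputable def interSeries [Semiring K] (S : List A → K) (L : Set (List A))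
    (w : List A) : K :=
  open Classical in if w ∈ L then S w else 0

/-- `h : Σ → Γ` is OPM-preserving: `a ⊙ b` iff `h(a) ⊙ h(b)` for every relation `⊙`. -/
def OPMPreserving (M : OPM A) (M' : OPM B) (h : A → B) : Prop :=
  ∀ a b : A, M.rel (some a) (some b) = M'.rel (some (h a)) (some (h b))

/-- The image series `h(S)(v) = ∑_{w ∈ (Σ,M)^+, h(w) = v} S(w)`. -/
noncomputable def mapSeries [Semiring K] (M : OPM A) (h : A → B) (S : List A → K)
    (v : List B) : K :=
  ∑ᶠ w ∈ {w | w ∈ OPWords M ∧ w.map h = v}, S w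

/-- The pullback OPM `h⁻¹(M)` along `h : Σ' → Σ`. -/
def pullOPM (M : OPM A) (h : B → A) : OPM B where
  rel o₁ o₂ := M.rel (o₁.map h) (o₂.map h)
  hash_lt b := M.hash_lt (h b)
  hash_gt b := M.hash_gt (h b)

/-- The Nivat class `N(Σ,M,K)`: series obtained from a one-state restricted wOPA over a
pulled-back OP alphabet, intersected with an OPL, followed by the projection. -/
def NivatClass [Semiring K] (M : OPM A) (S : List A → K) : Prop :=
  ∃ (B : Type) (_ : Fintype B) (h : B → A) (W : WOPA B K) (L : Set (List B)),
    Restricted W ∧ (∃ q₀ : W.Q, ∀ q : W.Q, q = q₀) ∧ IsOPL (pullOPM M h) L ∧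
    ∀ v ∈ OPWords M,
      S v = mapSeries (pullOPM M h) h (interSeries (behavior (pullOPM M h) W) L) v

/-- An OPL step function: a finite sum `∑ kᵢ · 1_{Lᵢ}` with the `Lᵢ` OPLs forming a
partition of `(Σ,M)^+`. -/
def IsOPLStep [Semiring K] (M : OPM A) (S : List A → K) : Prop :=
  ∃ (n : ℕ) (k : Fin n → K) (L : Fin n → Set (List A)),
    (∀ i, IsOPL M (L i)) ∧ (∀ i j, i ≠ j → Disjoint (L i) (L j)) ∧
    (⋃ i, L i) = OPWords M ∧ ∀ i, ∀ w ∈ L i, S w = k i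



/-!  ### Weighted MSO logic for OPLs -/

/-- Variables: `Sum.inl x` is a first-order variable, `Sum.inr X` a second-order one. -/
abbrev Var : Type := ℕ ⊕ ℕ

/-- Boolean MSO formulas over the OP alphabet `(Σ, M)`; labels range over `Σ ∪ {#}`
(`none` encodes `#`). -/
inductive BFormula (A : Type) where
  | lab (a : Option A) (x : ℕ)
  | le (x y : ℕ)
  | chainR (x y : ℕ)
  | mem (x X : ℕ)
  | not (β : BFormula A)
  | or (β₁ β₂ : BFormula A)
  | exFO (x : ℕ) (β : BFormula A)
  | exSO (X : ℕ) (β : BFormula A)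

/-- Weighted MSO formulas over `(Σ, M)` and the semiring `K`. -/
inductive WFormula (A K : Type) where
  | atom (β : BFormula A)
  | const (k : K)
  | plus (φ ψ : WFormula A K)
  | times (φ ψ : WFormula A K)
  | sumFO (x : ℕ) (φ : WFormula A K)
  | sumSO (X : ℕ) (φ : WFormula A K)
  | prodFO (x : ℕ) (φ : WFormula A K)

/-- Free variables of a boolean formula. -/
def BFormula.free {A : Type} : BFormula A → Finset Var
  | .lab _ x => {Sum.inl x}
  | .le x y => {Sum.inl x, Sum.inl y}
  | .chainR x y => {Sum.inl x, Sum.inl y}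
  | .mem x X => {Sum.inl x, Sum.inr X}
  | .not β => β.free
  | .or β₁ β₂ => β₁.free ∪ β₂.free
  | .exFO x β => β.free \ {Sum.inl x}
  | .exSO X β => β.free \ {Sum.inr X}

/-- Free variables of a weighted formula. -/
def WFormula.free {A K : Type} : WFormula A K → Finset Var
  | .atom β => β.free
  | .const _ => ∅
  | .plus φ ψ => φ.free ∪ ψ.free
  | .times φ ψ => φ.free ∪ ψ.free
  | .sumFO x φ => φ.free \ {Sum.inl x}
  | .sumSO X φ => φ.free \ {Sum.inr X}
  | .prodFO x φ => φ.free \ {Sum.inl x}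

/-- Satisfaction of a boolean formula on `w` under a first-order assignment `σ`
(into positions `1, ..., |w|`) and a second-order assignment `τ`. -/
def BSat (M : OPM A) (w : List A) : (ℕ → ℕ) → (ℕ → Set ℕ) → BFormula A → Prop
  | σ, _, .lab a x => letterAt w (σ x) = a
  | σ, _, .le x y => σ x ≤ σ y
  | σ, _, .chainR x y => Chain M (letterAt w) (σ x) (σ y)
  | σ, τ, .mem x X => σ x ∈ τ X
  | σ, τ, .not β => ¬ BSat M w σ τ β
  | σ, τ, .or β₁ β₂ => BSat M w σ τ β₁ ∨ BSat M w σ τ β₂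
  | σ, τ, .exFO x β => ∃ i ∈ Finset.Icc 1 w.length, BSat M w (Function.update σ x i) τ β
  | σ, τ, .exSO X β => ∃ I ⊆ Set.Icc 1 w.length, BSat M w σ (Function.update τ X I) β

/-- The (assignment-based) semantics of a weighted formula: sums range over the
positions `1, ..., |w|` (resp. their subsets) and the product quantifier multiplies
in increasing order of positions. -/
noncomputable def sem [Semiring K] (M : OPM A) (w : List A) :
    (ℕ → ℕ) → (ℕ → Set ℕ) → WFormula A K → K
  | σ, τ, .atom β => open Classical in if BSat M w σ τ β then 1 else 0
  | _, _, .const k => k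
  | σ, τ, .plus φ ψ => sem M w σ τ φ + sem M w σ τ ψ
  | σ, τ, .times φ ψ => sem M w σ τ φ * sem M w σ τ ψ
  | σ, τ, .sumFO x φ => ∑ i ∈ Finset.Icc 1 w.length, sem M w (Function.update σ x i) τ φ
  | σ, τ, .sumSO X φ => ∑ I ∈ (Finset.Icc 1 w.length).powerset,
      sem M w σ (Function.update τ X (↑I : Set ℕ)) φ
  | σ, τ, .prodFO x φ =>
      ((List.range w.length).map fun i => sem M w (Function.update σ x (i + 1)) τ φ).prod

/-- The extended alphabet `Σ_V = Σ × {0,1}^V`. -/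
abbrev AV (A : Type) (V : Finset Var) : Type := A × ({v // v ∈ V} → Bool)

/-- The OPM `M_V` on `Σ_V`, relating extended letters exactly as `M` relates their
first components. -/
def extOPM (M : OPM A) (V : Finset Var) : OPM (AV A V) where
  rel o₁ o₂ := M.rel (o₁.map Prod.fst) (o₂.map Prod.fst)
  hash_lt p := M.hash_lt p.1
  hash_gt p := M.hash_gt p.1

/-- The bit of the first-order variable `x` is set at position `i` of `u`. -/
def bitFO (V : Finset Var) (u : List (AV A V)) (x : ℕ) (i : ℕ) : Prop :=
  ∃ h : Sum.inl x ∈ V, ∃ p ∈ u[i - 1]?, 1 ≤ i ∧ p.2 ⟨Sum.inl x, h⟩ = true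

/-- The bit of the second-order variable `X` is set at position `i` of `u`. -/
def bitSO (V : Finset Var) (u : List (AV A V)) (X : ℕ) (i : ℕ) : Prop :=
  ∃ h : Sum.inr X ∈ V, ∃ p ∈ u[i - 1]?, 1 ≤ i ∧ p.2 ⟨Sum.inr X, h⟩ = true

/-- A word over `Σ_V` is valid if every first-order variable of `V` is assigned to
exactly one position. -/
def validEnc (V : Finset Var) (u : List (AV A V)) : Prop :=
  ∀ x : ℕ, Sum.inl x ∈ V → ∃! i, bitFO V u x i

/-- The first-order assignment encoded in a word over `Σ_V`. -/
noncomputable def decFO (V : Finset Var) (u : List (AV A V)) : ℕ → ℕ :=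
  fun x => sInf {i | bitFO V u x i}

/-- The second-order assignment encoded in a word over `Σ_V`. -/
def decSO (V : Finset Var) (u : List (AV A V)) : ℕ → Set ℕ :=
  fun X => {i | bitSO V u X i}

/-- The semantics `⟦φ⟧_V : (Σ_V, M_V)^+ → K`: `0` on non-valid words, and otherwise the
value of `φ` on the decoded word and assignments. -/
noncomputable def semV [Semiring K] (M : OPM A) (φ : WFormula A K) (V : Finset Var)
    (u : List (AV A V)) : K :=
  open Classical in
  if validEnc V u then sem M (u.map Prod.fst) (decFO V u) (decSO V u) φ else 0

/-- Restriction `(w, σ) ↦ (w, σ↾W)` of encoded words from `V`-encodings to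
`W`-encodings, for `W ⊆ V`. -/
def restrictWord {V W : Finset Var} (h : W ⊆ V) (u : List (AV A V)) : List (AV A W) :=
  u.map fun p => (p.1, fun v => p.2 ⟨v.1, h v.2⟩)

/-- Semantics of a sentence, as a series over `(Σ, M)^+`. -/
noncomputable def semClosed [Semiring K] (M : OPM A) (φ : WFormula A K)
    (w : List A) : K :=
  sem M w (fun _ => 1) (fun _ => ∅) φ

/-- Almost boolean formulas: built from constants and boolean formulas by `⊕` and `⊗`. -/
inductive AlmostBoolean {A K : Type} : WFormula A K → Prop where
  | atom (β : BFormula A) : AlmostBoolean (.atom β)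
  | const (k : K) : AlmostBoolean (.const k)
  | plus {φ ψ : WFormula A K} :
      AlmostBoolean φ → AlmostBoolean ψ → AlmostBoolean (.plus φ ψ)
  | times {φ ψ : WFormula A K} :
      AlmostBoolean φ → AlmostBoolean ψ → AlmostBoolean (.times φ ψ)

/-- The constants of `K` occurring in a weighted formula. -/
def consts {A K : Type} : WFormula A K → Set K
  | .atom _ => ∅
  | .const k => {k}
  | .plus φ ψ => consts φ ∪ consts ψ
  | .times φ ψ => consts φ ∪ consts ψ
  | .sumFO _ φ => consts φ
  | .sumSO _ φ => consts φ
  | .prodFO _ φ => consts φ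

/-- `⊗`-restricted formulas: in every subformula `ψ ⊗ θ`, either `ψ` is almost boolean
or the constants of `ψ` and `θ` commute elementwise. -/
def TimesRestricted [Semiring K] : WFormula A K → Prop
  | .atom _ => True
  | .const _ => True
  | .plus φ ψ => TimesRestricted φ ∧ TimesRestricted ψ
  | .times φ ψ => TimesRestricted φ ∧ TimesRestricted ψ ∧
      (AlmostBoolean φ ∨ ∀ k ∈ consts φ, ∀ k' ∈ consts ψ, k * k' = k' * k)
  | .sumFO _ φ => TimesRestricted φ
  | .sumSO _ φ => TimesRestricted φ
  | .prodFO _ φ => TimesRestricted φ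

/-- `∏`-restricted formulas: in every subformula `∏ₓ ψ`, the formula `ψ` is
almost boolean. -/
def ProdRestricted {A K : Type} : WFormula A K → Prop
  | .atom _ => True
  | .const _ => True
  | .plus φ ψ => ProdRestricted φ ∧ ProdRestricted ψ
  | .times φ ψ => ProdRestricted φ ∧ ProdRestricted ψ
  | .sumFO _ φ => ProdRestricted φ
  | .sumSO _ φ => ProdRestricted φ
  | .prodFO _ φ => ProdRestricted φ ∧ AlmostBoolean φ

/-- Restricted formulas: both `⊗`-restricted and `∏`-restricted. -/
def RestrictedFormula [Semiring K] (φ : WFormula A K) : Prop :=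
  TimesRestricted φ ∧ ProdRestricted φ

/-- The subformula relation on weighted formulas. -/
inductive Subf {A K : Type} : WFormula A K → WFormula A K → Prop where
  | refl (φ : WFormula A K) : Subf φ φ
  | plusL {χ φ ψ : WFormula A K} : Subf χ φ → Subf χ (.plus φ ψ)
  | plusR {χ φ ψ : WFormula A K} : Subf χ ψ → Subf χ (.plus φ ψ)
  | timesL {χ φ ψ : WFormula A K} : Subf χ φ → Subf χ (.times φ ψ)
  | timesR {χ φ ψ : WFormula A K} : Subf χ ψ → Subf χ (.times φ ψ)
  | sumFO {χ φ : WFormula A K} {x : ℕ} : Subf χ φ → Subf χ (.sumFO x φ)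
  | sumSO {χ φ : WFormula A K} {X : ℕ} : Subf χ φ → Subf χ (.sumSO X φ)
  | prodFO {χ φ : WFormula A K} {x : ℕ} : Subf χ φ → Subf χ (.prodFO x φ)

/-!
A word over `Σ_V`, `V = free(⊕_x φ)`, together with a candidate value of the quantified variable
is a word over `Σ_V × {0,1}`, which maps letter by letter to a word over `Σ_{free(φ)}`. So an
automaton for the sum guesses the extra bit at every position, runs the automaton for `⟦φ⟧` on
the image letters, and thereby sums over all guesses. For `⊕_x` a saturating counter of the
guessed bits, kept in the state, discards the guesses that do not mark exactly one position;
for `⊕_X` every guess counts. Pop weights are copied, so strict regularity is preserved as well.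
-/

section Runs

variable {A : Type} {M : OPM A} {T : OPA A}

def consumedLetters {Q : Type} : List (Move A Q) → List A
  | [] => []
  | .push _ b _ :: t => b :: consumedLetters t
  | .shift _ b _ :: t => b :: consumedLetters t
  | .pop _ _ _ :: t => consumedLetters t

theorem ExecList.input_eq {c c' : Config A T.Q} {ms : List (Move A T.Q)}
    (h : ExecList M T c ms c') : c.input = consumedLetters ms ++ c'.input := by
  induction h with
  | nil => rfl
  | cons hstep _ ih => cases hstep <;> simpa [consumedLetters] using ih

theorem consumedLetters_eq_of_mem_accRuns {w : List A} {ρ : T.Q × List (Move A T.Q) × T.Q}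
    (hρ : ρ ∈ AccRuns M T w) : consumedLetters ρ.2.1 = w := by
  simpa using hρ.2.2.input_eq.symm

/-- Every move consumes an input letter or shrinks the stack, and the stack only grows by
consuming input. -/
theorem ExecList.length_add_le {c c' : Config A T.Q} {ms : List (Move A T.Q)}
    (h : ExecList M T c ms c') :
    ms.length + 2 * c'.input.length + c'.stack.length ≤
      2 * c.input.length + c.stack.length := by
  induction h with
  | nil => simp
  | cons hstep _ ih => cases hstep <;> simp only [List.length_cons] at ih ⊢ <;> omega

instance {Q : Type} [Finite A] [Finite Q] : Finite (Move A Q) :=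
  Finite.of_injective
    (fun m : Move A Q => match m with
      | .push q b r => (Sum.inl (q, b, r) : (Q × A × Q) ⊕ (Q × A × Q) ⊕ (Q × Q × Q))
      | .shift q b r => Sum.inr (Sum.inl (q, b, r))
      | .pop q p r => Sum.inr (Sum.inr (q, p, r)))
    (by intro m m' h; cases m <;> cases m' <;> simp_all)

theorem accRuns_finite [Finite A] (M : OPM A) (T : OPA A) (w : List A) :
    (AccRuns M T w).Finite := by
  have := T.fin
  refine (Set.finite_univ.prod
    ((List.finite_length_le (Move A T.Q) (2 * w.length)).prod Set.finite_univ)).subset ?_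
  rintro ⟨qI, ms, qF⟩ ⟨-, -, hrun⟩
  have := hrun.length_add_le
  simp only [List.length_nil] at this
  exact ⟨trivial, by simp only [Set.mem_ofPred_eq]; omega, trivial⟩

end Runs

section Pullback

variable {A₁ A₂ K Q : Type}

abbrev pullW [Semiring K] (h : A₁ → A₂) (W : WOPA A₂ K) : WOPA A₁ K where
  Q := W.Q
  fin := W.fin
  I := W.I
  F := W.F
  δpush := {t | (t.1, h t.2.1, t.2.2) ∈ W.δpush}
  δshift := {t | (t.1, h t.2.1, t.2.2) ∈ W.δshift}
  δpop := W.δpop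
  wtpush t := W.wtpush (t.1, h t.2.1, t.2.2)
  wtshift t := W.wtshift (t.1, h t.2.1, t.2.2)
  wtpop := W.wtpop

theorem Restricted.pullW [Semiring K] {W : WOPA A₂ K} (hW : Restricted W) (h : A₁ → A₂) :
    Restricted (pullW h W) :=
  hW

def Move.map (h : A₁ → A₂) : Move A₁ Q → Move A₂ Q
  | .push q b r => .push q (h b) r
  | .shift q b r => .shift q (h b) r
  | .pop q p r => .pop q p r

def Config.map (h : A₁ → A₂) (c : Config A₁ Q) : Config A₂ Q :=
  ⟨c.stack.map (Prod.map h id), c.state, c.input.map h⟩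

@[simp] theorem pullOPM_rel (M : OPM A₂) (h : A₁ → A₂) (o o' : Option A₁) :
    (pullOPM M h).rel o o' = M.rel (o.map h) (o'.map h) :=
  rfl

theorem topSym_map (h : A₁ → A₂) (st : List (A₁ × Q)) :
    topSym (st.map (Prod.map h id)) = (topSym st).map h := by
  cases st <;> rfl

theorem eq_of_map_move_eq (h : A₁ → A₂) :
    ∀ {ms ms' : List (Move A₁ Q)}, ms.map (Move.map h) = ms'.map (Move.map h) →
      consumedLetters ms = consumedLetters ms' → ms = ms'
  | [], [], _, _ => rfl
  | [], _ :: _, hm, _ | _ :: _, [], hm, _ => by simp at hm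
  | m :: t, m' :: t', hm, hc => by
    have ih := eq_of_map_move_eq h (ms := t) (ms' := t')
    cases m <;> cases m' <;> simp_all [Move.map, consumedLetters]

variable [Semiring K] (M : OPM A₂) (h : A₁ → A₂) (W : WOPA A₂ K)

theorem Exec.map {c c' : Config A₁ (pullW h W).Q} {m : Move A₁ (pullW h W).Q}
    (hx : Exec (pullOPM M h) (pullW h W).toOPA c m c') :
    Exec M W.toOPA (c.map h) (m.map h) (c'.map h) := by
  cases hx with
  | push hrel hmem => exact .push (by rwa [topSym_map]) hmem
  | shift hrel hmem => exact .shift hrel hmem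
  | pop hrel hmem => exact .pop (by rwa [List.head?_map]) hmem

theorem ExecList.map {c c' : Config A₁ (pullW h W).Q} {ms : List (Move A₁ (pullW h W).Q)}
    (hx : ExecList (pullOPM M h) (pullW h W).toOPA c ms c') :
    ExecList M W.toOPA (c.map h) (ms.map (Move.map h)) (c'.map h) := by
  induction hx with
  | nil => exact .nil _
  | cons hstep _ ih => exact .cons (hstep.map M h W) ih

theorem ExecList.exists_of_map {d d' : Config A₂ W.Q} {ns : List (Move A₂ W.Q)}
    (hx : ExecList M W.toOPA d ns d') :
    ∀ c : Config A₁ (pullW h W).Q, d = c.map h →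
      ∃ ms c', ExecList (pullOPM M h) (pullW h W).toOPA c ms c' ∧
        ns = ms.map (Move.map h) ∧ d' = c'.map h := by
  induction hx with
  | nil => exact fun c hc => ⟨[], c, .nil (M := pullOPM M h) (T := (pullW h W).toOPA) c, rfl, hc⟩
  | cons hstep _ ih =>
    rintro ⟨st, q, inp⟩
    cases hstep with
    | push hrel hmem =>
      intro hc
      simp only [Config.map, Config.mk.injEq] at hc
      obtain ⟨hst, rfl, hinp⟩ := hc
      obtain ⟨b, x, rfl, rfl, rfl⟩ := List.map_eq_cons_iff.mp hinp.symm
      subst hst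
      obtain ⟨ms, c', hrun, rfl, rfl⟩ := ih ⟨(b, _) :: st, _, x⟩ rfl
      refine ⟨_ :: ms, c', .cons (.push ?_ hmem) hrun, rfl, rfl⟩
      simpa [topSym_map] using hrel
    | shift hrel hmem =>
      intro hc
      simp only [Config.map, Config.mk.injEq] at hc
      obtain ⟨hst, rfl, hinp⟩ := hc
      obtain ⟨b, x, rfl, rfl, rfl⟩ := List.map_eq_cons_iff.mp hinp.symm
      obtain ⟨⟨a, p⟩, st', rfl, hap, rfl⟩ := List.map_eq_cons_iff.mp hst.symm
      simp only [Prod.map, id, Prod.mk.injEq] at hap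
      obtain ⟨rfl, rfl⟩ := hap
      obtain ⟨ms, c', hrun, rfl, rfl⟩ := ih ⟨(b, p) :: st', _, x⟩ rfl
      exact ⟨_ :: ms, c', .cons (.shift hrel hmem) hrun, rfl, rfl⟩
    | pop hrel hmem =>
      intro hc
      simp only [Config.map, Config.mk.injEq] at hc
      obtain ⟨hst, rfl, hinp⟩ := hc
      obtain ⟨⟨a, p⟩, st', rfl, hap, rfl⟩ := List.map_eq_cons_iff.mp hst.symm
      simp only [Prod.map, id, Prod.mk.injEq] at hap
      obtain ⟨rfl, rfl⟩ := hap
      subst hinp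
      obtain ⟨ms, c', hrun, rfl, rfl⟩ := ih ⟨st', _, inp⟩ rfl
      refine ⟨_ :: ms, c', .cons (.pop ?_ hmem) hrun, rfl, rfl⟩
      simpa [List.head?_map] using hrel

theorem accRuns_map (v : List A₁) :
    AccRuns M W.toOPA (v.map h) =
      (fun ρ => (ρ.1, ρ.2.1.map (Move.map h), ρ.2.2)) ''
        AccRuns (pullOPM M h) (pullW h W).toOPA v := by
  ext ⟨qI, ns, qF⟩
  constructor
  · rintro ⟨hI, hF, hrun⟩
    obtain ⟨ms, ⟨st, q, x⟩, hrun', rfl, hc⟩ := hrun.exists_of_map M h W ⟨[], qI, v⟩ rfl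
    simp only [Config.map, Config.mk.injEq, eq_comm (a := []), List.map_eq_nil_iff] at hc
    obtain ⟨rfl, rfl, rfl⟩ := hc
    exact ⟨(qI, ms, qF), ⟨hI, hF, hrun'⟩, rfl⟩
  · rintro ⟨⟨qI, ms, qF⟩, ⟨hI, hF, hrun⟩, hρ⟩
    simp only [Prod.mk.injEq] at hρ
    obtain ⟨rfl, rfl, rfl⟩ := hρ
    exact ⟨hI, hF, hrun.map M h W⟩

theorem behavior_pullW (v : List A₁) :
    behavior (pullOPM M h) (pullW h W) v = behavior M W (v.map h) := by
  rw [behavior, behavior, accRuns_map, finsum_mem_image]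
  · refine finsum_mem_congr rfl fun ρ _ => ?_
    rw [List.map_map]
    congr 1
    exact List.map_congr_left fun m _ => by cases m <;> rfl
  · rintro ⟨qI, ms, qF⟩ hρ ⟨qI', ms', qF'⟩ hρ' heq
    simp only [Prod.mk.injEq] at heq
    obtain ⟨rfl, hms, rfl⟩ := heq
    rw [eq_of_map_move_eq h hms ((consumedLetters_eq_of_mem_accRuns hρ).trans
      (consumedLetters_eq_of_mem_accRuns hρ').symm)]

end Pullback

section Compatibility

variable {A₁ A₂ : Type}

theorem Chain.congr {M₁ : OPM A₁} {M₂ : OPM A₂} {L₁ : ℕ → Option A₁} {L₂ : ℕ → Option A₂}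
    (hrel : ∀ i j, M₁.rel (L₁ i) (L₁ j) = M₂.rel (L₂ i) (L₂ j)) {i j : ℕ}
    (h : Chain M₁ L₁ i j) : Chain M₂ L₂ i j :=
  Chain.rec (motive_1 := fun a b _ => ChainMid M₂ L₂ a b)
    (motive_2 := fun a b _ => ChainGap M₂ L₂ a b) (motive_3 := fun a b _ => Chain M₂ L₂ a b)
    (fun hgt _ ih => .last (hrel _ _ ▸ hgt) ih)
    (fun heq _ _ ih₁ ih₂ => .step (hrel _ _ ▸ heq) ih₁ ih₂)
    (fun k => .adj k) (fun _ ih => .chain ih)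
    (fun hlt _ _ ih₁ ih₂ => .mk (hrel _ _ ▸ hlt) ih₁ ih₂) h

theorem letterAt_map (h : A₁ → A₂) (w : List A₁) (i : ℕ) :
    letterAt (w.map h) i = (letterAt w i).map h := by
  unfold letterAt
  split <;> simp

theorem map_mem_OPWords_iff (M : OPM A₂) (h : A₁ → A₂) (w : List A₁) :
    w.map h ∈ OPWords M ↔ w ∈ OPWords (pullOPM M h) := by
  have hrel : ∀ i j, (pullOPM M h).rel (letterAt w i) (letterAt w j) =
      M.rel (letterAt (w.map h) i) (letterAt (w.map h) j) := by
    simp [letterAt_map]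
  simp only [OPWords, Set.mem_ofPred_eq, ne_eq, List.map_eq_nil_iff, List.length_map]
  exact and_congr_right fun _ =>
    ⟨Chain.congr fun i j => (hrel i j).symm, Chain.congr hrel⟩

end Compatibility

section Projection

variable {A₁ A₂ K D Q : Type} (h : A₁ → A₂) (d₀ : D) (g : D → A₁ → D)

/-- Reads `u` by guessing a preimage `w` under `h` and running `W` on it, while the
deterministic automaton `(d₀, g, G)` reads `w` in its memory `D × Option A₁`. The memory also
records the last guessed letter, so that different guesses give different runs. -/
abbrev projW [Semiring K] [Fintype A₁] [Fintype D] (W : WOPA A₁ K) (G : Set D) :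
    WOPA A₂ K where
  Q := W.Q × (D × Option A₁)
  fin := have := W.fin; inferInstance
  I := {p | p.1 ∈ W.I ∧ p.2 = (d₀, none)}
  F := {p | p.1 ∈ W.F ∧ p.2.1 ∈ G}
  δpush := {t | ∃ q μ b r, (q, b, r) ∈ W.δpush ∧ t = ((q, μ), h b, (r, (g μ.1 b, some b)))}
  δshift := {t | ∃ q μ b r, (q, b, r) ∈ W.δshift ∧ t = ((q, μ), h b, (r, (g μ.1 b, some b)))}
  δpop := {t | ∃ q μ p μ' r, (q, p, r) ∈ W.δpop ∧ t = ((q, μ), (p, μ'), (r, μ))}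
  wtpush t := match t.2.2.2.2 with
    | some b => W.wtpush (t.1.1, b, t.2.2.1)
    | none => 1
  wtshift t := match t.2.2.2.2 with
    | some b => W.wtshift (t.1.1, b, t.2.2.1)
    | none => 1
  wtpop t := W.wtpop (t.1.1, t.2.1.1, t.2.2.1)

theorem Restricted.projW [Semiring K] [Fintype A₁] [Fintype D] {W : WOPA A₁ K}
    (hW : Restricted W) (G : Set D) : Restricted (projW h d₀ g W G) := by
  rintro t ⟨q, μ, p, μ', r, hmem, rfl⟩
  exact hW _ hmem

def liftStack (st : List (A₁ × Q)) (S : List (D × Option A₁)) :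
    List (A₂ × (Q × (D × Option A₁))) :=
  (st.zip S).map fun y => (h y.1.1, (y.1.2, y.2))

def liftConf (μ : D × Option A₁) (S : List (D × Option A₁)) (c : Config A₁ Q) :
    Config A₂ (Q × (D × Option A₁)) :=
  ⟨liftStack h c.stack S, (c.state, μ), c.input.map h⟩

def liftMoves : (D × Option A₁) → List (D × Option A₁) → List (Move A₁ Q) →
    List (Move A₂ (Q × (D × Option A₁)))
  | _, _, [] => []
  | μ, S, .push q b r :: t =>
      .push (q, μ) (h b) (r, (g μ.1 b, some b)) :: liftMoves (g μ.1 b, some b) (μ :: S) t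
  | μ, S, .shift q b r :: t =>
      .shift (q, μ) (h b) (r, (g μ.1 b, some b)) :: liftMoves (g μ.1 b, some b) S t
  | μ, S, .pop q p r :: t =>
      .pop (q, μ) (p, S.headD (d₀, none)) (r, μ) :: liftMoves μ S.tail t

def memoryAfter : (D × Option A₁) × List (D × Option A₁) → List (Move A₁ Q) →
    (D × Option A₁) × List (D × Option A₁)
  | z, [] => z
  | (μ, S), .push _ b _ :: t => memoryAfter ((g μ.1 b, some b), μ :: S) t
  | (μ, S), .shift _ b _ :: t => memoryAfter ((g μ.1 b, some b), S) t
  | (μ, S), .pop _ _ _ :: t => memoryAfter (μ, S.tail) t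

def liftRun (ρ : Q × List (Move A₁ Q) × Q) :
    (Q × (D × Option A₁)) × List (Move A₂ (Q × (D × Option A₁))) × (Q × (D × Option A₁)) :=
  ((ρ.1, (d₀, none)), liftMoves h d₀ g (d₀, none) [] ρ.2.1,
    (ρ.2.2, (memoryAfter g ((d₀, none), []) ρ.2.1).1))

theorem memoryAfter_fst_fst :
    ∀ (ms : List (Move A₁ Q)) (μ : D × Option A₁) (S : List (D × Option A₁)),
      (memoryAfter g (μ, S) ms).1.1 = (consumedLetters ms).foldl g μ.1
  | [], _, _ => rfl
  | .push _ b _ :: t, μ, _ => memoryAfter_fst_fst t (g μ.1 b, some b) _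
  | .shift _ b _ :: t, μ, _ => memoryAfter_fst_fst t (g μ.1 b, some b) _
  | .pop _ _ _ :: t, μ, _ => memoryAfter_fst_fst t μ _

theorem topSym_liftStack {st : List (A₁ × Q)} {S : List (D × Option A₁)}
    (hlen : S.length = st.length) : topSym (liftStack h st S) = (topSym st).map h := by
  cases st <;> cases S <;> simp_all [topSym, liftStack]

theorem liftStack_eq_cons {st : List (A₁ × Q)} {S : List (D × Option A₁)}
    {y : A₂ × (Q × (D × Option A₁))} {t : List (A₂ × (Q × (D × Option A₁)))}
    (heq : liftStack h st S = y :: t) (hlen : S.length = st.length) :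
    ∃ a p μ st₀ S₀, st = (a, p) :: st₀ ∧ S = μ :: S₀ ∧ S₀.length = st₀.length ∧
      y = (h a, (p, μ)) ∧ t = liftStack h st₀ S₀ := by
  match st, S with
  | (a, p) :: st₀, μ :: S₀ =>
    simp only [liftStack, List.zip_cons_cons, List.map_cons, List.cons.injEq] at heq
    exact ⟨a, p, μ, st₀, S₀, rfl, rfl, by simpa using hlen, heq.1.symm, heq.2.symm⟩
  | [], _ | _ :: _, [] => simp [liftStack] at heq

theorem prod_moveWt_liftMoves [Semiring K] [Fintype A₁] [Fintype D] (W : WOPA A₁ K)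
    (G : Set D) :
    ∀ (ms : List (Move A₁ W.Q)) (μ : D × Option A₁) (S : List (D × Option A₁)),
      ((liftMoves h d₀ g μ S ms).map (moveWt (projW h d₀ g W G))).prod =
        (ms.map (moveWt W)).prod
  | [], _, _ => rfl
  | .push _ _ _ :: t, _, _ | .shift _ _ _ :: t, _, _ | .pop _ _ _ :: t, _, _ => by
    simp only [liftMoves, List.map_cons, List.prod_cons, prod_moveWt_liftMoves W G t]
    rfl

def Move.unlift : Move A₂ (Q × (D × Option A₁)) → Option (Move A₁ Q)
  | .push (q, _) _ (r, _, some b) => some (.push q b r)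
  | .shift (q, _) _ (r, _, some b) => some (.shift q b r)
  | .pop (q, _) (p, _) (r, _) => some (.pop q p r)
  | _ => none

theorem map_unlift_liftMoves :
    ∀ (ms : List (Move A₁ Q)) (μ : D × Option A₁) (S : List (D × Option A₁)),
      (liftMoves h d₀ g μ S ms).map Move.unlift = ms.map some
  | [], _, _ => rfl
  | .push _ _ _ :: t, _, _ | .shift _ _ _ :: t, _, _ | .pop _ _ _ :: t, _, _ => by
    simp only [liftMoves, List.map_cons, map_unlift_liftMoves t]
    rfl

theorem liftMoves_inj {ms ms' : List (Move A₁ Q)} {μ μ' : D × Option A₁}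
    {S S' : List (D × Option A₁)}
    (heq : liftMoves h d₀ g μ S ms = liftMoves h d₀ g μ' S' ms') : ms = ms' := by
  have := congrArg (List.map Move.unlift) heq
  rw [map_unlift_liftMoves, map_unlift_liftMoves] at this
  exact List.map_injective_iff.mpr (Option.some_injective _) this

end Projection

section ProjectionRuns

variable {A₁ A₂ K D : Type} [Semiring K] [Fintype A₁] [Fintype D]
variable (M : OPM A₂) (h : A₁ → A₂) (d₀ : D) (g : D → A₁ → D) (W : WOPA A₁ K) (G : Set D)

theorem ExecList.lift {c c' : Config A₁ W.Q} {ms : List (Move A₁ W.Q)}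
    (hx : ExecList (pullOPM M h) W.toOPA c ms c') :
    ∀ (μ : D × Option A₁) (S : List (D × Option A₁)), S.length = c.stack.length →
      ExecList M (projW h d₀ g W G).toOPA (liftConf h μ S c) (liftMoves h d₀ g μ S ms)
          (liftConf h (memoryAfter g (μ, S) ms).1 (memoryAfter g (μ, S) ms).2 c') ∧
        (memoryAfter g (μ, S) ms).2.length = c'.stack.length := by
  induction hx with
  | nil => exact fun μ S hlen => ⟨.nil _, hlen⟩
  | cons hstep _ ih =>
    intro μ S hlen
    cases hstep with
    | @push st q r b x hrel hmem =>
      obtain ⟨hrun, hlen'⟩ := ih (g μ.1 b, some b) (μ :: S) (by simpa using hlen)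
      refine ⟨.cons (.push ?_ ⟨q, μ, b, r, hmem, rfl⟩) hrun, hlen'⟩
      simpa [liftConf, topSym_liftStack h hlen] using hrel
    | shift hrel hmem =>
      obtain ⟨μp, S, rfl⟩ := List.exists_cons_of_length_eq_add_one hlen
      obtain ⟨hrun, hlen'⟩ := ih _ (μp :: S) (by simpa using hlen)
      exact ⟨.cons (.shift hrel ⟨_, μ, _, _, hmem, rfl⟩) hrun, hlen'⟩
    | pop hrel hmem =>
      obtain ⟨μp, S, rfl⟩ := List.exists_cons_of_length_eq_add_one hlen
      obtain ⟨hrun, hlen'⟩ := ih μ S (by simpa using hlen)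
      refine ⟨.cons (.pop ?_ ⟨_, μ, _, μp, _, hmem, rfl⟩) hrun, hlen'⟩
      simpa [liftConf, List.head?_map] using hrel

theorem ExecList.exists_of_lift {d d' : Config A₂ (projW h d₀ g W G).Q}
    {ns : List (Move A₂ (projW h d₀ g W G).Q)}
    (hx : ExecList M (projW h d₀ g W G).toOPA d ns d') :
    ∀ (st : List (A₁ × W.Q)) (q : W.Q) (μ : D × Option A₁) (S : List (D × Option A₁)),
      d.stack = liftStack h st S → d.state = (q, μ) → S.length = st.length →
      ∀ x : List A₁, x.map h = d'.input →
      ∃ (w : List A₁) (ms : List (Move A₁ W.Q)) (st' : List (A₁ × W.Q))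
        (S' : List (D × Option A₁)),
        w.map h ++ d'.input = d.input ∧ S'.length = st'.length ∧
        d'.stack = liftStack h st' S' ∧ d'.state.2 = (memoryAfter g (μ, S) ms).1 ∧
        ExecList (pullOPM M h) W.toOPA ⟨st, q, w ++ x⟩ ms ⟨st', d'.state.1, x⟩ ∧
        ns = liftMoves h d₀ g μ S ms := by
  induction hx with
  | nil =>
    rintro st q μ S hst hq hlen x -
    exact ⟨[], [], st, S, by simp, hlen, hst, by simp [hq, memoryAfter], by rw [hq]; exact .nil _,
      rfl⟩
  | cons hstep _ ih =>
    cases hstep with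
    | push hrel hmem =>
      rintro st q μ S rfl rfl hlen x hx
      obtain ⟨q, μ, b, r, hmem, ⟨⟩⟩ := hmem
      obtain ⟨w, ms, st', S', hw, hlen', hst', hμ, hrun, rfl⟩ :=
        ih ((b, q) :: st) r _ (μ :: S) rfl rfl (by simpa using hlen) x hx
      refine ⟨b :: w, .push q b r :: ms, st', S', by simp [hw], hlen', hst', hμ,
        .cons (.push ?_ hmem) hrun, rfl⟩
      simpa [topSym_liftStack h hlen] using hrel
    | shift hrel hmem =>
      rintro st q μ S hst rfl hlen x hx
      obtain ⟨a, p, μp, st, S, rfl, rfl, hlen, ⟨⟩, rfl⟩ := liftStack_eq_cons h hst.symm hlen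
      obtain ⟨q, μ, b, r, hmem, ⟨⟩⟩ := hmem
      obtain ⟨w, ms, st', S', hw, hlen', hst', hμ, hrun, rfl⟩ :=
        ih ((b, p) :: st) r _ (μp :: S) rfl rfl (by simpa using hlen) x hx
      exact ⟨b :: w, .shift q b r :: ms, st', S', by simp [hw], hlen', hst', hμ,
        .cons (.shift hrel hmem) hrun, rfl⟩
    | pop hrel hmem =>
      rintro st q μ S hst rfl hlen x hx
      obtain ⟨a, p, μp, st, S, rfl, rfl, hlen, ⟨⟩, rfl⟩ := liftStack_eq_cons h hst.symm hlen
      obtain ⟨q, μ, p, μ', r, hmem, ⟨⟩⟩ := hmem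
      obtain ⟨w, ms, st', S', hw, hlen', hst', hμ, hrun, rfl⟩ := ih st r μ S rfl rfl hlen x hx
      refine ⟨w, .pop q p r :: ms, st', S', hw, hlen', hst', hμ, .cons (.pop ?_ hmem) hrun, rfl⟩
      rw [pullOPM_rel, ← List.head?_map, List.map_append, hx, hw]
      exact hrel

theorem accRuns_projW (u : List A₂) :
    AccRuns M (projW h d₀ g W G).toOPA u =
      ⋃ w ∈ {w : List A₁ | w.map h = u ∧ w.foldl g d₀ ∈ G},
        liftRun h d₀ g '' AccRuns (pullOPM M h) W.toOPA w := by
  ext ⟨⟨qI, μI⟩, ns, qF, μF⟩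
  simp only [Set.mem_iUnion, Set.mem_image, AccRuns, Set.mem_ofPred_eq, exists_prop]
  constructor
  · rintro ⟨⟨hI, rfl⟩, ⟨hF, hG⟩, hrun⟩
    obtain ⟨w, ms, st', S', hw, hlen', hst', rfl, hrun', rfl⟩ :=
      hrun.exists_of_lift M h d₀ g W G [] qI (d₀, none) [] rfl rfl rfl [] rfl
    obtain rfl : st' = [] := by
      rcases st' with _ | ⟨_, _⟩
      · rfl
      · rcases S' with _ | ⟨_, _⟩ <;> simp [liftStack] at hlen' hst'
    have hcons : consumedLetters ms = w := by simpa using hrun'.input_eq.symm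
    rw [memoryAfter_fst_fst, hcons] at hG
    exact ⟨w, ⟨by simpa using hw, hG⟩, (qI, ms, qF), ⟨hI, hF, by simpa using hrun'⟩, rfl⟩
  · rintro ⟨w, ⟨rfl, hG⟩, ⟨qI, ms, qF⟩, ⟨hI, hF, hrun⟩, hρ⟩
    simp only [liftRun, Prod.mk.injEq] at hρ
    obtain ⟨⟨rfl, rfl⟩, rfl, rfl, rfl⟩ := hρ
    refine ⟨⟨hI, rfl⟩, ⟨hF, ?_⟩, (hrun.lift M h d₀ g W G (d₀, none) [] rfl).1⟩
    rwa [memoryAfter_fst_fst, show consumedLetters ms = w by simpa using hrun.input_eq.symm]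

theorem behavior_projW (u : List A₂) :
    behavior M (projW h d₀ g W G) u =
      ∑ᶠ w ∈ {w : List A₁ | w.map h = u ∧ w.foldl g d₀ ∈ G}, behavior (pullOPM M h) W w := by
  have hfin : {w : List A₁ | w.map h = u ∧ w.foldl g d₀ ∈ G}.Finite :=
    (List.finite_length_eq A₁ u.length).subset fun w hw => by simp [← hw.1]
  have hlift_inj {w w' : List A₁} {ρ ρ'} (hρ : ρ ∈ AccRuns (pullOPM M h) W.toOPA w)
      (hρ' : ρ' ∈ AccRuns (pullOPM M h) W.toOPA w') (heq : liftRun h d₀ g ρ = liftRun h d₀ g ρ') :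
      w = w' ∧ ρ = ρ' := by
    obtain ⟨qI, ms, qF⟩ := ρ
    obtain ⟨qI', ms', qF'⟩ := ρ'
    simp only [liftRun, Prod.mk.injEq] at heq
    obtain ⟨⟨rfl, -⟩, hms, rfl, -⟩ := heq
    obtain rfl := liftMoves_inj h d₀ g hms
    exact ⟨(consumedLetters_eq_of_mem_accRuns hρ).symm.trans
      (consumedLetters_eq_of_mem_accRuns hρ'), rfl⟩
  rw [behavior, accRuns_projW, finsum_mem_biUnion]
  · refine finsum_mem_congr rfl fun w _ => ?_
    rw [finsum_mem_image fun ρ hρ ρ' hρ' heq => (hlift_inj hρ hρ' heq).2, behavior]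
    exact finsum_mem_congr rfl fun ρ _ => prod_moveWt_liftMoves h d₀ g W G _ _ _
  · exact fun w _ w' _ hne => Set.disjoint_left.mpr
      fun _ ⟨_, hρ, hρeq⟩ ⟨_, hρ', hρeq'⟩ => hne (hlift_inj hρ hρ' (hρeq.trans hρeq'.symm)).1
  · exact hfin
  · exact fun w _ => (accRuns_finite _ _ w).image _

end ProjectionRuns

section Bits

open Finset

def setBits (n : ℕ) (I : Finset ℕ) : List Bool :=
  (List.range n).map fun k => decide (k + 1 ∈ I)

def bitIdx (bs : List Bool) : Finset ℕ :=
  {j ∈ Icc 1 bs.length | bs[j - 1]? = some true}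

@[simp] theorem length_setBits (n : ℕ) (I : Finset ℕ) : (setBits n I).length = n := by
  simp [setBits]

theorem getElem?_setBits (n : ℕ) (I : Finset ℕ) (k : ℕ) :
    (setBits n I)[k]? = if k < n then some (decide (k + 1 ∈ I)) else none := by
  simp only [setBits, List.getElem?_map]
  split_ifs <;> simp_all

theorem getElem?_setBits_eq_some_true_iff {n : ℕ} {I : Finset ℕ} (hI : I ⊆ Icc 1 n) (j : ℕ) :
    (1 ≤ j ∧ (setBits n I)[j - 1]? = some true) ↔ j ∈ I := by
  rw [getElem?_setBits]
  constructor
  · rintro ⟨h1, h⟩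
    split_ifs at h
    simpa [Nat.sub_add_cancel h1] using h
  · intro hj
    obtain ⟨h1, h2⟩ := mem_Icc.mp (hI hj)
    rw [if_pos (by omega), Nat.sub_add_cancel h1]
    simpa using ⟨h1, hj⟩

theorem bitIdx_setBits {n : ℕ} {I : Finset ℕ} (hI : I ⊆ Icc 1 n) : bitIdx (setBits n I) = I := by
  ext j
  rw [bitIdx, mem_filter, ← getElem?_setBits_eq_some_true_iff hI, length_setBits, mem_Icc]
  constructor
  · exact fun ⟨⟨h1, _⟩, h⟩ => ⟨h1, h⟩
  · intro h
    exact ⟨⟨h.1, (mem_Icc.mp (hI ((getElem?_setBits_eq_some_true_iff hI j).mp h))).2⟩, h.2⟩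

theorem setBits_bitIdx (bs : List Bool) : setBits bs.length (bitIdx bs) = bs := by
  refine List.ext_getElem? fun k => ?_
  rw [getElem?_setBits]
  split_ifs with hk
  · rw [List.getElem?_eq_getElem hk]
    cases hb : bs[k] <;> simp [bitIdx, hk, Nat.succ_le_of_lt hk, hb]
  · exact (List.getElem?_eq_none (by omega)).symm

theorem count_setBits {n : ℕ} {I : Finset ℕ} (hI : I ⊆ Icc 1 n) :
    (setBits n I).count true = I.card := by
  have : (setBits n I).count true = ((range n).filter (· + 1 ∈ I)).card := by
    simp only [setBits, List.count_eq_countP, List.countP_eq_length_filter, card_def,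
      filter_val, range_val, Multiset.range, Multiset.filter_coe, Multiset.coe_card]
    simp [List.filter_map, Function.comp_def]
  rw [this]
  refine card_nbij' (· + 1) (· - 1) ?_ ?_ ?_ ?_ <;> intro k hk <;>
    simp only [coe_filter, mem_range, Set.mem_ofPred_eq, SetLike.mem_coe, add_tsub_cancel_right]
      at hk ⊢
  · exact hk.2
  · have := mem_Icc.mp (hI hk); exact ⟨by omega, by rwa [Nat.sub_add_cancel this.1]⟩
  · have := mem_Icc.mp (hI hk); omega

variable {C : Type}

/-- `u` with the positions of `I` (counted from `1`) marked `true`. -/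
def markPositions (u : List C) (I : Finset ℕ) : List (C × Bool) :=
  u.zip (setBits u.length I)

@[simp] theorem map_fst_markPositions (u : List C) (I : Finset ℕ) :
    (markPositions u I).map Prod.fst = u :=
  List.map_fst_zip (by simp)

@[simp] theorem map_snd_markPositions (u : List C) (I : Finset ℕ) :
    (markPositions u I).map Prod.snd = setBits u.length I :=
  List.map_snd_zip (by simp)

theorem injOn_markPositions (u : List C) :
    Set.InjOn (markPositions u) ↑(Icc 1 u.length).powerset := by
  intro I hI I' hI' heq
  have := congrArg (bitIdx ∘ List.map Prod.snd) heq
  simp only [Function.comp_apply, map_snd_markPositions] at this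
  rwa [bitIdx_setBits (mem_powerset.mp hI), bitIdx_setBits (mem_powerset.mp hI')] at this

theorem setOf_map_fst_eq (u : List C) :
    {w : List (C × Bool) | w.map Prod.fst = u} =
      markPositions u '' ↑(Icc 1 u.length).powerset := by
  ext w
  constructor
  · rintro rfl
    refine ⟨bitIdx (w.map Prod.snd), ?_, ?_⟩
    · rw [mem_coe, mem_powerset, List.length_map, ← List.length_map (f := Prod.snd)]
      exact filter_subset _ _
    · rw [markPositions, List.length_map, ← List.length_map (f := Prod.snd), setBits_bitIdx,
        ← List.unzip_fst, ← List.unzip_snd, List.zip_unzip]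
  · rintro ⟨I, -, rfl⟩
    exact map_fst_markPositions u I

theorem finsum_mem_map_fst_eq {R : Type} [AddCommMonoid R] (u : List C)
    (P : List (C × Bool) → Prop) [DecidablePred P] (f : List (C × Bool) → R) :
    ∑ᶠ w ∈ {w : List (C × Bool) | w.map Prod.fst = u ∧ P w}, f w =
      ∑ I ∈ (Icc 1 u.length).powerset with P (markPositions u I), f (markPositions u I) := by
  have hset : {w : List (C × Bool) | w.map Prod.fst = u ∧ P w} =
      markPositions u '' ↑((Icc 1 u.length).powerset.filter fun I => P (markPositions u I)) := by
    ext w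
    have := Set.ext_iff.mp (setOf_map_fst_eq u) w
    simp only [Set.mem_ofPred_eq, Set.mem_image, coe_filter] at this ⊢
    constructor
    · rintro ⟨hw, hP⟩
      obtain ⟨I, hI, rfl⟩ := this.mp hw
      exact ⟨I, ⟨hI, hP⟩, rfl⟩
    · rintro ⟨I, ⟨hI, hP⟩, rfl⟩
      exact ⟨map_fst_markPositions u I, hP⟩
  rw [hset, finsum_mem_image ((injOn_markPositions u).mono (coe_subset.mpr (filter_subset _ _))),
    finsum_mem_coe_finset]

def satCount (k : ℕ) : Fin 3 := ⟨min k 2, by omega⟩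

def satCountStep (d : Fin 3) (b : Bool) : Fin 3 := if b then satCount (d + 1 : ℕ) else d

theorem foldl_satCountStep :
    ∀ (bs : List Bool) (k : ℕ), bs.foldl satCountStep (satCount k) = satCount (k + bs.count true)
  | [], _ => rfl
  | b :: bs, k => by
    have hstep : satCountStep (satCount k) b = satCount (k + if b then 1 else 0) := by
      cases b
      · rfl
      · simp only [satCountStep, ↓reduceIte, satCount, Fin.mk.injEq]
        omega
    rw [List.foldl_cons, hstep, foldl_satCountStep bs, List.count_cons]
    congr 1
    cases b
    · rfl
    · simp only [↓reduceIte, BEq.rfl]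
      omega

theorem satCount_eq_one_iff (k : ℕ) : satCount k = satCount 1 ↔ k = 1 := by
  simp only [satCount, Fin.mk.injEq]
  omega

end Bits

section FreeVariables

variable {A K : Type} (M : OPM A) (w : List A)

theorem update_congr_of_ne {α : Type} {σ σ' : ℕ → α} {P : ℕ → Prop} (x : ℕ) (a : α)
    (h : ∀ y, P y → y ≠ x → σ y = σ' y) (y : ℕ) (hy : P y) :
    Function.update σ x a y = Function.update σ' x a y := by
  by_cases hyx : y = x
  · simp [hyx]
  · simp [Function.update_of_ne hyx, h y hy hyx]

theorem BSat_congr (β : BFormula A) {σ σ' : ℕ → ℕ} {τ τ' : ℕ → Set ℕ}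
    (hσ : ∀ y, Sum.inl y ∈ β.free → σ y = σ' y) (hτ : ∀ Y, Sum.inr Y ∈ β.free → τ Y = τ' Y) :
    BSat M w σ τ β ↔ BSat M w σ' τ' β := by
  induction β generalizing σ σ' τ τ' with
  | lab a x | le x y | chainR x y | mem x X => simp_all [BSat, BFormula.free]
  | not β ih => exact not_congr (ih hσ hτ)
  | or β₁ β₂ ih₁ ih₂ =>
    simp only [BFormula.free, Finset.mem_union] at hσ hτ
    exact or_congr (ih₁ (fun y hy => hσ y (.inl hy)) (fun Y hY => hτ Y (.inl hY)))
      (ih₂ (fun y hy => hσ y (.inr hy)) (fun Y hY => hτ Y (.inr hY)))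
  | exFO x β ih =>
    simp only [BFormula.free, Finset.mem_sdiff, Finset.mem_singleton] at hσ hτ
    refine exists_congr fun i => and_congr_right fun _ => ih ?_ fun Y hY => hτ Y ⟨hY, by simp⟩
    exact update_congr_of_ne x i fun y hy hyx => hσ y ⟨hy, by simpa using hyx⟩
  | exSO X β ih =>
    simp only [BFormula.free, Finset.mem_sdiff, Finset.mem_singleton] at hσ hτ
    refine exists_congr fun I => and_congr_right fun _ => ih (fun y hy => hσ y ⟨hy, by simp⟩) ?_
    exact update_congr_of_ne X I fun Y hY hYX => hτ Y ⟨hY, by simpa using hYX⟩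

theorem sem_congr [Semiring K] (φ : WFormula A K) {σ σ' : ℕ → ℕ} {τ τ' : ℕ → Set ℕ}
    (hσ : ∀ y, Sum.inl y ∈ φ.free → σ y = σ' y) (hτ : ∀ Y, Sum.inr Y ∈ φ.free → τ Y = τ' Y) :
    sem M w σ τ φ = sem M w σ' τ' φ := by
  induction φ generalizing σ σ' τ τ' with
  | atom β => classical exact if_congr (BSat_congr M w β hσ hτ) rfl rfl
  | const k => rfl
  | plus φ ψ ihφ ihψ | times φ ψ ihφ ihψ =>
    simp only [WFormula.free, Finset.mem_union] at hσ hτ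
    simp only [sem, ihφ (fun y hy => hσ y (.inl hy)) (fun Y hY => hτ Y (.inl hY)),
      ihψ (fun y hy => hσ y (.inr hy)) (fun Y hY => hτ Y (.inr hY))]
  | sumFO x φ ih =>
    simp only [WFormula.free, Finset.mem_sdiff, Finset.mem_singleton] at hσ hτ
    exact Finset.sum_congr rfl fun i _ =>
      ih (update_congr_of_ne x i fun y hy hyx => hσ y ⟨hy, by simpa using hyx⟩)
        fun Y hY => hτ Y ⟨hY, by simp⟩
  | prodFO x φ ih =>
    simp only [WFormula.free, Finset.mem_sdiff, Finset.mem_singleton] at hσ hτ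
    exact congrArg List.prod <| List.map_congr_left fun i _ =>
      ih (update_congr_of_ne x _ fun y hy hyx => hσ y ⟨hy, by simpa using hyx⟩)
        fun Y hY => hτ Y ⟨hY, by simp⟩
  | sumSO X φ ih =>
    simp only [WFormula.free, Finset.mem_sdiff, Finset.mem_singleton] at hσ hτ
    exact Finset.sum_congr rfl fun I _ =>
      ih (fun y hy => hσ y ⟨hy, by simp⟩)
        (update_congr_of_ne X _ fun Y hY hYX => hτ Y ⟨hY, by simpa using hYX⟩)

end FreeVariables

section Encoding

open Finset

variable {A : Type} {V F : Finset Var}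

/-- A letter of `Σ_V` with an extra bit, read as a letter of `Σ_F`: every variable of `F`
outside `V` gets the extra bit. The bit is kept apart from `Σ_F` because the quantified variable
need not be free in the body, and then the bit is simply ignored. -/
def extendLetter (p : AV A V × Bool) : AV A F :=
  (p.1.1, fun v => if hv : v.1 ∈ V then p.1.2 ⟨v.1, hv⟩ else p.2)

def extendWord (F : Finset Var) (u : List (AV A V)) (I : Finset ℕ) : List (AV A F) :=
  (markPositions u I).map extendLetter

theorem map_fst_extendWord (u : List (AV A V)) (I : Finset ℕ) :
    (extendWord F u I).map Prod.fst = u.map Prod.fst := by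
  conv_rhs => rw [← map_fst_markPositions u I]
  rw [extendWord, List.map_map, List.map_map]
  rfl

def varBit (V : Finset Var) (u : List (AV A V)) (v : Var) (i : ℕ) : Prop :=
  ∃ h : v ∈ V, ∃ p ∈ u[i - 1]?, 1 ≤ i ∧ p.2 ⟨v, h⟩ = true

theorem bitFO_eq_varBit (u : List (AV A V)) (x : ℕ) : bitFO V u x = varBit V u (.inl x) :=
  rfl

theorem bitSO_eq_varBit (u : List (AV A V)) (X : ℕ) : bitSO V u X = varBit V u (.inr X) :=
  rfl

theorem varBit_extendWord_of_mem (hVF : V ⊆ F) (u : List (AV A V)) (I : Finset ℕ) {v : Var}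
    (hv : v ∈ V) (j : ℕ) : varBit F (extendWord F u I) v j ↔ varBit V u v j := by
  conv_rhs => rw [← map_fst_markPositions u I]
  simp only [varBit, extendWord, List.getElem?_map, Option.mem_def, Option.map_eq_some_iff]
  constructor
  · rintro ⟨_, _, ⟨p, hp, rfl⟩, hj, hbit⟩
    exact ⟨hv, p.1, ⟨p, hp, rfl⟩, hj, by simpa [extendLetter, hv] using hbit⟩
  · rintro ⟨_, _, ⟨p, hp, rfl⟩, hj, hbit⟩
    exact ⟨hVF hv, _, ⟨p, hp, rfl⟩, hj, by simpa [extendLetter, hv] using hbit⟩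

theorem varBit_extendWord_of_not_mem {u : List (AV A V)} {I : Finset ℕ}
    (hI : I ⊆ Icc 1 u.length) {v : Var} (hv : v ∈ F) (hv' : v ∉ V) (j : ℕ) :
    varBit F (extendWord F u I) v j ↔ j ∈ I := by
  rw [← getElem?_setBits_eq_some_true_iff hI, ← map_snd_markPositions u I]
  simp only [varBit, extendWord, List.getElem?_map, Option.mem_def, Option.map_eq_some_iff]
  constructor
  · rintro ⟨_, _, ⟨p, hp, rfl⟩, hj, hbit⟩
    exact ⟨hj, p, hp, by simpa [extendLetter, hv'] using hbit⟩
  · rintro ⟨hj, p, hp, hbit⟩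
    exact ⟨hv, _, ⟨p, hp, rfl⟩, hj, by simpa [extendLetter, hv'] using hbit⟩

theorem decFO_extendWord_of_mem (hVF : V ⊆ F) (u : List (AV A V)) (I : Finset ℕ) {y : ℕ}
    (hy : Sum.inl y ∈ V) : decFO F (extendWord F u I) y = decFO V u y := by
  simp only [decFO, bitFO_eq_varBit, varBit_extendWord_of_mem hVF u I hy]

theorem decSO_extendWord_of_mem (hVF : V ⊆ F) (u : List (AV A V)) (I : Finset ℕ) {Y : ℕ}
    (hY : Sum.inr Y ∈ V) : decSO F (extendWord F u I) Y = decSO V u Y := by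
  simp only [decSO, bitSO_eq_varBit, varBit_extendWord_of_mem hVF u I hY]

theorem decFO_extendWord_of_not_mem {u : List (AV A V)} {i : ℕ} (hi : i ∈ Icc 1 u.length)
    {x : ℕ} (hx : Sum.inl x ∈ F) (hx' : Sum.inl x ∉ V) : decFO F (extendWord F u {i}) x = i := by
  simp only [decFO, bitFO_eq_varBit,
    varBit_extendWord_of_not_mem (singleton_subset_iff.mpr hi) hx hx', mem_singleton,
    Set.ofPred_eq_eq_singleton, csInf_singleton]

theorem decSO_extendWord_of_not_mem {u : List (AV A V)} {I : Finset ℕ} (hI : I ⊆ Icc 1 u.length)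
    {X : ℕ} (hX : Sum.inr X ∈ F) (hX' : Sum.inr X ∉ V) : decSO F (extendWord F u I) X = I :=
  Set.ext fun j => varBit_extendWord_of_not_mem hI hX hX' j

theorem validEnc_extendWord_iff (hVF : V ⊆ F) {u : List (AV A V)} {I : Finset ℕ}
    (hI : I ⊆ Icc 1 u.length) (hnew : ∀ y, Sum.inl y ∈ F → Sum.inl y ∉ V → ∃! j, j ∈ I) :
    validEnc F (extendWord F u I) ↔ validEnc V u := by
  simp only [validEnc, bitFO_eq_varBit]
  constructor
  · intro h y hy
    simpa only [varBit_extendWord_of_mem hVF u I hy] using h y (hVF hy)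
  · intro h y hy
    by_cases hyV : Sum.inl y ∈ V
    · simpa only [varBit_extendWord_of_mem hVF u I hyV] using h y hyV
    · simpa only [varBit_extendWord_of_not_mem hI hy hyV] using hnew y hy hyV

end Encoding

section SumSemantics

open Finset

variable {A K : Type} [Semiring K] (M : OPM A) (φ : WFormula A K)

theorem semV_sumFO (x : ℕ) (u : List (AV A (φ.free \ {Sum.inl x}))) :
    semV M (.sumFO x φ) (φ.free \ {Sum.inl x}) u =
      ∑ i ∈ Icc 1 u.length, semV M φ φ.free (extendWord φ.free u {i}) := by
  have hVF : φ.free \ {Sum.inl x} ⊆ φ.free := sdiff_subset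
  have hvalid : ∀ i ∈ Icc 1 u.length,
      validEnc φ.free (extendWord φ.free u {i}) ↔ validEnc (φ.free \ {Sum.inl x}) u :=
    fun i hi => validEnc_extendWord_iff hVF (singleton_subset_iff.mpr hi)
      fun _ _ _ => ⟨i, mem_singleton_self i, fun _ => mem_singleton.mp⟩
  unfold semV
  split_ifs with hv
  · simp only [sem, List.length_map]
    refine sum_congr rfl fun i hi => ?_
    rw [if_pos ((hvalid i hi).mpr hv), map_fst_extendWord]
    refine sem_congr M _ φ (fun y hy => ?_) (fun Y hY => ?_)
    · by_cases hyx : y = x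
      · subst hyx
        rw [Function.update_self, decFO_extendWord_of_not_mem hi hy (by simp)]
      · rw [Function.update_of_ne hyx, decFO_extendWord_of_mem hVF u _ (by simp [hy, hyx])]
    · rw [decSO_extendWord_of_mem hVF u _ (by simp [hY])]
  · exact (sum_eq_zero fun i hi => if_neg (mt (hvalid i hi).mp hv)).symm

theorem semV_sumSO (X : ℕ) (u : List (AV A (φ.free \ {Sum.inr X}))) :
    semV M (.sumSO X φ) (φ.free \ {Sum.inr X}) u =
      ∑ I ∈ (Icc 1 u.length).powerset, semV M φ φ.free (extendWord φ.free u I) := by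
  have hVF : φ.free \ {Sum.inr X} ⊆ φ.free := sdiff_subset
  have hvalid : ∀ I ∈ (Icc 1 u.length).powerset,
      validEnc φ.free (extendWord φ.free u I) ↔ validEnc (φ.free \ {Sum.inr X}) u :=
    fun I hI => validEnc_extendWord_iff hVF (mem_powerset.mp hI)
      fun _ hy hy' => absurd (mem_sdiff.mpr ⟨hy, by simp⟩) hy'
  unfold semV
  split_ifs with hv
  · simp only [sem, List.length_map]
    refine sum_congr rfl fun I hI => ?_
    rw [if_pos ((hvalid I hI).mpr hv), map_fst_extendWord]
    refine sem_congr M _ φ (fun y hy => ?_) (fun Y hY => ?_)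
    · rw [decFO_extendWord_of_mem hVF u _ (by simp [hy])]
    · by_cases hYX : Y = X
      · subst hYX
        rw [Function.update_self, decSO_extendWord_of_not_mem (mem_powerset.mp hI) hY (by simp)]
      · rw [Function.update_of_ne hYX, decSO_extendWord_of_mem hVF u _ (by simp [hY, hYX])]
  · exact (sum_eq_zero fun I hI => if_neg (mt (hvalid I hI).mp hv)).symm

end SumSemantics

section Glue

open Finset

variable {A K : Type} (M : OPM A)

theorem pullOPM_extendLetter (V F : Finset Var) :
    pullOPM (extOPM M F) (extendLetter (A := A) (V := V)) = pullOPM (extOPM M V) Prod.fst := by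
  simp only [pullOPM, extOPM, OPM.mk.injEq]
  funext o o'
  cases o <;> cases o' <;> rfl

theorem extendWord_mem_OPWords {V F : Finset Var} {u : List (AV A V)}
    (hu : u ∈ OPWords (extOPM M V)) (I : Finset ℕ) :
    extendWord F u I ∈ OPWords (extOPM M F) := by
  rw [extendWord, map_mem_OPWords_iff, pullOPM_extendLetter, ← map_mem_OPWords_iff,
    map_fst_markPositions]
  exact hu

theorem exists_behavior_eq_sum_extendWord [Fintype A] [Semiring K] {V F : Finset Var}
    {S : List (AV A F) → K} {W : WOPA (AV A F) K}
    (hW : ∀ w ∈ OPWords (extOPM M F), S w = behavior (extOPM M F) W w)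
    {D : Type} [Fintype D] (d₀ : D) (g : D → Bool → D) (G : Set D) [DecidablePred (· ∈ G)] :
    ∃ W' : WOPA (AV A V) K, (Restricted W → Restricted W') ∧
      ∀ u ∈ OPWords (extOPM M V), behavior (extOPM M V) W' u =
        ∑ I ∈ (Icc 1 u.length).powerset with (setBits u.length I).foldl g d₀ ∈ G,
          S (extendWord F u I) := by
  refine ⟨projW Prod.fst d₀ (fun d p => g d p.2) (pullW extendLetter W) G,
    fun hr => (hr.pullW _).projW _ _ _ G, fun u hu => ?_⟩
  rw [behavior_projW, ← pullOPM_extendLetter M V F]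
  simp only [behavior_pullW]
  rw [finsum_mem_map_fst_eq]
  refine sum_congr (filter_congr fun I _ => ?_) fun I _ =>
    (hW _ (extendWord_mem_OPWords M hu I)).symm
  rw [← map_snd_markPositions u I, List.foldl_map]

variable [Fintype A] [Semiring K] (φ : WFormula A K) {W : WOPA (AV A φ.free) K}

theorem exists_behavior_eq_semV_sumFO
    (hW : ∀ w ∈ OPWords (extOPM M φ.free), semV M φ φ.free w = behavior (extOPM M φ.free) W w)
    (x : ℕ) :
    ∃ W' : WOPA (AV A (φ.free \ {Sum.inl x})) K, (Restricted W → Restricted W') ∧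
      ∀ u ∈ OPWords (extOPM M (φ.free \ {Sum.inl x})),
        semV M (.sumFO x φ) (φ.free \ {Sum.inl x}) u =
          behavior (extOPM M (φ.free \ {Sum.inl x})) W' u := by
  obtain ⟨W', hr, hW'⟩ := exists_behavior_eq_sum_extendWord (V := φ.free \ {Sum.inl x}) M hW
    (satCount 0) satCountStep {satCount 1}
  refine ⟨W', hr, fun u hu => ?_⟩
  have hcard : ∀ I ∈ (Icc 1 u.length).powerset,
      (setBits u.length I).foldl satCountStep (satCount 0) ∈ ({satCount 1} : Set (Fin 3)) ↔
        I.card = 1 := fun I hI => by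
    rw [Set.mem_singleton_iff, foldl_satCountStep, zero_add, satCount_eq_one_iff,
      count_setBits (mem_powerset.mp hI)]
  rw [hW' u hu, semV_sumFO, filter_congr hcard, ← powersetCard_eq_filter, powersetCard_one,
    sum_map]
  rfl

theorem exists_behavior_eq_semV_sumSO
    (hW : ∀ w ∈ OPWords (extOPM M φ.free), semV M φ φ.free w = behavior (extOPM M φ.free) W w)
    (X : ℕ) :
    ∃ W' : WOPA (AV A (φ.free \ {Sum.inr X})) K, (Restricted W → Restricted W') ∧
      ∀ u ∈ OPWords (extOPM M (φ.free \ {Sum.inr X})),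
        semV M (.sumSO X φ) (φ.free \ {Sum.inr X}) u =
          behavior (extOPM M (φ.free \ {Sum.inr X})) W' u := by
  obtain ⟨W', hr, hW'⟩ := exists_behavior_eq_sum_extendWord (V := φ.free \ {Sum.inr X}) M hW
    () (fun _ _ => ()) Set.univ
  refine ⟨W', hr, fun u hu => ?_⟩
  rw [hW' u hu, semV_sumSO, filter_true_of_mem fun _ _ => Set.mem_univ _]

end Glue

/-- Closure under the sum quantifiers `⊕ₓ` and `⊕_X`. -/
theorem closure_sumQuant {A K : Type} [Fintype A] [Semiring K] (M : OPM A)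
    (φ : WFormula A K) (x X : ℕ) :
    (Regular (extOPM M φ.free) (semV M φ φ.free) →
      Regular (extOPM M (WFormula.sumFO x φ).free)
        (semV M (.sumFO x φ) (WFormula.sumFO x φ).free) ∧
      Regular (extOPM M (WFormula.sumSO X φ).free)
        (semV M (.sumSO X φ) (WFormula.sumSO X φ).free)) ∧
    (StrictlyRegular (extOPM M φ.free) (semV M φ φ.free) →
      StrictlyRegular (extOPM M (WFormula.sumFO x φ).free)
        (semV M (.sumFO x φ) (WFormula.sumFO x φ).free) ∧
      StrictlyRegular (extOPM M (WFormula.sumSO X φ).free)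
        (semV M (.sumSO X φ) (WFormula.sumSO X φ).free)) := by
  constructor
  · rintro ⟨W, hW⟩
    obtain ⟨W₁, -, hW₁⟩ := exists_behavior_eq_semV_sumFO M φ hW x
    obtain ⟨W₂, -, hW₂⟩ := exists_behavior_eq_semV_sumSO M φ hW X
    exact ⟨⟨W₁, hW₁⟩, ⟨W₂, hW₂⟩⟩
  · rintro ⟨W, hr, hW⟩
    obtain ⟨W₁, hr₁, hW₁⟩ := exists_behavior_eq_semV_sumFO M φ hW x
    obtain ⟨W₂, hr₂, hW₂⟩ := exists_behavior_eq_semV_sumSO M φ hW X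
    exact ⟨⟨W₁, hr₁ hr, hW₁⟩, ⟨W₂, hr₂ hr, hW₂⟩⟩

end WOP
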